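/- arXiv:2305.17604 — 6 statements merged into one kernel-verified Lean document; each statement's English description precedes it below -/
import Mathlib

section
/- For a symmetric order-3 tensor S on R^d and a symmetric d×d matrix A, the vector ⟨S,A⟩ with coordinates ⟨S,A⟩_i = Σ_{j,k} S_{ijk} A_{jk} satisfies ‖⟨S,A⟩‖ ≤ d‖A‖_op ‖S‖_op, where ‖S‖_op = sup_{‖u‖=1} ⟨S, u⊗u⊗u⟩. -/
/-!
Diagonalize `A = ∑ₘ λₘ eₘ eₘᵀ` with orthonormal eigenvectors `eₘ`; then
`⟨S, A⟩ = ∑ₘ λₘ S(·, eₘ, eₘ)` and `|λₘ| ≤ ‖A‖_op`, so it suffices that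
`‖S(·, e, e)‖ = sup_{‖w‖ = 1} S(w, e, e) ≤ ‖S‖_op` for each unit `e`. This is Banach's theorem that
a symmetric trilinear form attains its norm on the diagonal. Writing `w = t e + s e'` with `e' ⊥ e`,
the restriction of `S(z, z, z)` to the plane of `e, e'` is a binary cubic, and `S(w, e, e)` is a
convex combination of its values at three unit vectors, at angles `θ` and `θ ± 2π/3` where
`3θ = arccos t`.
-/

open Finset Matrix

variable {ι : Type*} [Fintype ι]

def IsSymmTensor (S : ι → ι → ι → ℝ) : Prop :=
  ∀ i j k, S i j k = S j i k ∧ S i j k = S i k j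

def trilinear (S : ι → ι → ι → ℝ) (x y z : ι → ℝ) : ℝ :=
  ∑ i, ∑ j, ∑ k, S i j k * x i * y j * z k

def contract₂ (S : ι → ι → ι → ℝ) (y z : ι → ℝ) : ι → ℝ :=
  fun i ↦ ∑ j, ∑ k, S i j k * y j * z k

section Trilinear

variable {S : ι → ι → ι → ℝ}

theorem trilinear_eq_dotProduct_contract₂ (x y z : ι → ℝ) :
    trilinear S x y z = x ⬝ᵥ contract₂ S y z := by
  simp only [trilinear, contract₂, dotProduct, mul_sum]
  exact sum_congr rfl fun _ _ ↦ sum_congr rfl fun _ _ ↦ sum_congr rfl fun _ _ ↦ by ring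

theorem trilinear_smul_add_smul_left (x x' y z : ι → ℝ) (a b : ℝ) :
    trilinear S (a • x + b • x') y z = a * trilinear S x y z + b * trilinear S x' y z := by
  simp only [trilinear, Pi.add_apply, Pi.smul_apply, smul_eq_mul, mul_sum, ← sum_add_distrib]
  exact sum_congr rfl fun _ _ ↦ sum_congr rfl fun _ _ ↦ sum_congr rfl fun _ _ ↦ by ring

theorem trilinear_smul_add_smul_middle (x y y' z : ι → ℝ) (a b : ℝ) :
    trilinear S x (a • y + b • y') z = a * trilinear S x y z + b * trilinear S x y' z := by
  simp only [trilinear, Pi.add_apply, Pi.smul_apply, smul_eq_mul, mul_sum, ← sum_add_distrib]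
  exact sum_congr rfl fun _ _ ↦ sum_congr rfl fun _ _ ↦ sum_congr rfl fun _ _ ↦ by ring

theorem trilinear_smul_add_smul_right (x y z z' : ι → ℝ) (a b : ℝ) :
    trilinear S x y (a • z + b • z') = a * trilinear S x y z + b * trilinear S x y z' := by
  simp only [trilinear, Pi.add_apply, Pi.smul_apply, smul_eq_mul, mul_sum, ← sum_add_distrib]
  exact sum_congr rfl fun _ _ ↦ sum_congr rfl fun _ _ ↦ sum_congr rfl fun _ _ ↦ by ring

theorem trilinear_smul_smul_smul (x y z : ι → ℝ) (a b c : ℝ) :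
    trilinear S (a • x) (b • y) (c • z) = a * b * c * trilinear S x y z := by
  simp only [trilinear, Pi.smul_apply, smul_eq_mul, mul_sum]
  exact sum_congr rfl fun _ _ ↦ sum_congr rfl fun _ _ ↦ sum_congr rfl fun _ _ ↦ by ring

theorem trilinear_comm_left (hS : IsSymmTensor S) (x y z : ι → ℝ) :
    trilinear S x y z = trilinear S y x z := by
  rw [trilinear, sum_comm]
  exact sum_congr rfl fun j _ ↦ sum_congr rfl fun i _ ↦ sum_congr rfl fun k _ ↦ by
    rw [(hS j i k).1]; ring

theorem trilinear_comm_right (hS : IsSymmTensor S) (x y z : ι → ℝ) :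
    trilinear S x y z = trilinear S x z y := by
  refine sum_congr rfl fun i _ ↦ ?_
  rw [sum_comm]
  exact sum_congr rfl fun k _ ↦ sum_congr rfl fun j _ ↦ by rw [(hS i k j).2]; ring

theorem trilinear_smul_add_smul_cube (hS : IsSymmTensor S) (u v : ι → ℝ) (a b : ℝ) :
    trilinear S (a • u + b • v) (a • u + b • v) (a • u + b • v) =
      trilinear S u u u * a ^ 3 + 3 * trilinear S u u v * a ^ 2 * b +
        3 * trilinear S u v v * a * b ^ 2 + trilinear S v v v * b ^ 3 := by
  simp only [trilinear_smul_add_smul_left, trilinear_smul_add_smul_middle,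
    trilinear_smul_add_smul_right]
  rw [trilinear_comm_right hS u v u, trilinear_comm_left hS v u u, trilinear_comm_right hS u v u,
    trilinear_comm_left hS v u v, trilinear_comm_right hS v v u, trilinear_comm_left hS v u v]
  ring

end Trilinear

/- The nodes are `(cos φ, sin φ)` for `φ = θ, θ ± 2π/3`, where `c = cos θ`, `σ = sin θ`, `r = √3`;
the weights are `((1 + 2 cos 2φ) / 3) ^ 2 = (4 cos² φ - 1) ^ 2 / 9`. As `3φ ≡ 3θ (mod 2π)` at all
three nodes, any weights summing to 1 integrate the frequency-3 part of the cubic correctly. -/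
theorem binary_cubic_quadrature {c σ r : ℝ} (hcσ : c ^ 2 + σ ^ 2 = 1) (hr : r ^ 2 = 3)
    (p : ℝ → ℝ → ℝ) {α β γ δ : ℝ}
    (hp : ∀ a b, p a b = α * a ^ 3 + 3 * β * a ^ 2 * b + 3 * γ * a * b ^ 2 + δ * b ^ 3) :
    (4 * c ^ 2 - 1) ^ 2 / 9 * p c σ
        + (4 * ((c + r * σ) / 2) ^ 2 - 1) ^ 2 / 9 * p (-(c + r * σ) / 2) ((r * c - σ) / 2)
        + (4 * ((r * σ - c) / 2) ^ 2 - 1) ^ 2 / 9 * p ((r * σ - c) / 2) (-(r * c + σ) / 2) =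
      (4 * c ^ 3 - 3 * c) * α + (3 * σ - 4 * σ ^ 3) * β := by
  simp only [hp]
  grind

theorem exists_triple_angle {t s : ℝ} (hts : t ^ 2 + s ^ 2 = 1) (hs : 0 ≤ s) :
    ∃ c σ : ℝ, c ^ 2 + σ ^ 2 = 1 ∧ t = 4 * c ^ 3 - 3 * c ∧ s = 3 * σ - 4 * σ ^ 3 := by
  have ht : |t| ≤ 1 := by rw [← sq_le_one_iff_abs_le_one]; nlinarith
  obtain ⟨ht₁, ht₂⟩ := abs_le.1 ht
  refine ⟨Real.cos (Real.arccos t / 3), Real.sin (Real.arccos t / 3), Real.cos_sq_add_sin_sq _,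
    ?_, ?_⟩
  · rw [← Real.cos_three_mul, mul_div_cancel₀ _ three_ne_zero, Real.cos_arccos ht₁ ht₂]
  · rw [← Real.sin_three_mul, mul_div_cancel₀ _ three_ne_zero, Real.sin_arccos,
      ← Real.sqrt_sq hs]
    congr 1; linarith

theorem binary_cubic_le {α β γ δ M : ℝ}
    (h : ∀ a b : ℝ, a ^ 2 + b ^ 2 = 1 →
      α * a ^ 3 + 3 * β * a ^ 2 * b + 3 * γ * a * b ^ 2 + δ * b ^ 3 ≤ M)
    {t s : ℝ} (hts : t ^ 2 + s ^ 2 = 1) (hs : 0 ≤ s) : t * α + s * β ≤ M := by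
  obtain ⟨c, σ, hcσ, rfl, rfl⟩ := exists_triple_angle hts hs
  set r := √3
  have hr : r ^ 2 = 3 := Real.sq_sqrt (by norm_num)
  have h₀ := h c σ hcσ
  have h₁ := h (-(c + r * σ) / 2) ((r * c - σ) / 2) (by grind)
  have h₂ := h ((r * σ - c) / 2) (-(r * c + σ) / 2) (by grind)
  have hq : (4 * c ^ 2 - 1) ^ 2 / 9 + (4 * ((c + r * σ) / 2) ^ 2 - 1) ^ 2 / 9
      + (4 * ((r * σ - c) / 2) ^ 2 - 1) ^ 2 / 9 = 1 := by grind
  rw [← binary_cubic_quadrature hcσ hr _ fun _ _ ↦ rfl]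
  calc _ ≤ (4 * c ^ 2 - 1) ^ 2 / 9 * M + (4 * ((c + r * σ) / 2) ^ 2 - 1) ^ 2 / 9 * M
        + (4 * ((r * σ - c) / 2) ^ 2 - 1) ^ 2 / 9 * M := by gcongr
    _ = M := by rw [← add_mul, ← add_mul, hq, one_mul]

section Banach

variable {S : ι → ι → ι → ℝ} {M : ℝ}

theorem dotProduct_smul_add_smul_self {u v : ι → ℝ} (hu : u ⬝ᵥ u = 1) (hv : v ⬝ᵥ v = 1)
    (huv : u ⬝ᵥ v = 0) (a b : ℝ) : (a • u + b • v) ⬝ᵥ (a • u + b • v) = a ^ 2 + b ^ 2 := by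
  simp only [add_dotProduct, dotProduct_add, smul_dotProduct, dotProduct_smul, smul_eq_mul, hu, hv,
    huv, dotProduct_comm v u]
  ring

theorem trilinear_le_of_forall_cube_le (hS : IsSymmTensor S)
    (hM : ∀ z : ι → ℝ, z ⬝ᵥ z = 1 → trilinear S z z z ≤ M) {u w : ι → ℝ}
    (hu : u ⬝ᵥ u = 1) (hw : w ⬝ᵥ w = 1) : trilinear S w u u ≤ M := by
  set t := w ⬝ᵥ u
  set v := w - t • u
  have hv : v ⬝ᵥ v = 1 - t ^ 2 := by
    simp only [v, sub_dotProduct, dotProduct_sub, smul_dotProduct, dotProduct_smul, hu, hw,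
      dotProduct_comm u w, smul_eq_mul]
    ring
  have hv_nonneg : 0 ≤ v ⬝ᵥ v := sum_nonneg fun i _ ↦ mul_self_nonneg (v i)
  set s := √(1 - t ^ 2)
  by_cases hs : s = 0
  · have hwu : w = t • u := by
      rw [Real.sqrt_eq_zero (hv ▸ hv_nonneg), ← hv, dotProduct_self_eq_zero] at hs
      exact sub_eq_zero.1 hs
    have ht : t ^ 2 = 1 := by linarith [Real.sqrt_eq_zero (hv ▸ hv_nonneg) |>.1 hs]
    calc trilinear S w u u = t * trilinear S u u u := by
          simpa [hwu] using trilinear_smul_smul_smul (S := S) u u u t 1 1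
      _ = trilinear S w w w := by
          rw [hwu, trilinear_smul_smul_smul]; linear_combination (-t * trilinear S u u u) * ht
      _ ≤ M := hM w hw
  · have hs_sq : s ^ 2 = 1 - t ^ 2 := Real.sq_sqrt (hv ▸ hv_nonneg)
    set e := s⁻¹ • v
    have he : e ⬝ᵥ e = 1 := by
      simp only [e, smul_dotProduct, dotProduct_smul, smul_eq_mul, hv, ← hs_sq]
      field_simp
    have hue : u ⬝ᵥ e = 0 := by
      simp only [e, v, dotProduct_smul, dotProduct_sub, dotProduct_smul, hu, dotProduct_comm u w,
        smul_eq_mul, t]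
      ring
    have hwe : w = t • u + s • e := by
      simp only [e, smul_smul, mul_inv_cancel₀ hs, one_smul, v, add_sub_cancel]
    have key := binary_cubic_le (t := t) (s := s) (M := M) (fun a b hab ↦ by
      rw [← trilinear_smul_add_smul_cube hS]
      exact hM _ (by rw [dotProduct_smul_add_smul_self hu he hue, hab]))
      (by rw [hs_sq]; ring) (Real.sqrt_nonneg _)
    rwa [hwe, trilinear_smul_add_smul_left, trilinear_comm_left hS e, trilinear_comm_right hS u e]

theorem norm_toLp_eq_sqrt_dotProduct (x : ι → ℝ) : ‖WithLp.toLp 2 x‖ = √(x ⬝ᵥ x) := by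
  simp [EuclideanSpace.norm_eq, dotProduct, sq]

theorem norm_toLp_contract₂_le (hS : IsSymmTensor S)
    (hM : ∀ z : ι → ℝ, z ⬝ᵥ z = 1 → trilinear S z z z ≤ M) {u : ι → ℝ} (hu : u ⬝ᵥ u = 1) :
    ‖WithLp.toLp 2 (contract₂ S u u)‖ ≤ M := by
  set V := contract₂ S u u
  rw [norm_toLp_eq_sqrt_dotProduct]
  set N := √(V ⬝ᵥ V)
  have hV : 0 ≤ V ⬝ᵥ V := sum_nonneg fun i _ ↦ mul_self_nonneg (V i)
  rcases (show 0 ≤ N from Real.sqrt_nonneg _).eq_or_lt with hN | hN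
  · have hu_le := hM u hu
    have hneg_le := hM ((-1 : ℝ) • u) (by simp [hu])
    rw [trilinear_smul_smul_smul] at hneg_le
    rw [← hN]
    linarith
  · have hN_sq : N ^ 2 = V ⬝ᵥ V := Real.sq_sqrt hV
    have hw : (N⁻¹ • V) ⬝ᵥ (N⁻¹ • V) = 1 := by
      simp only [smul_dotProduct, dotProduct_smul, smul_eq_mul, ← hN_sq]
      field_simp
    calc N = trilinear S (N⁻¹ • V) u u := by
          rw [trilinear_eq_dotProduct_contract₂, smul_dotProduct, smul_eq_mul, ← hN_sq]
          field_simp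
      _ ≤ M := trilinear_le_of_forall_cube_le hS hM hu hw

end Banach

theorem Matrix.IsHermitian.apply_eq_sum_eigenvalues_mul [DecidableEq ι] {A : Matrix ι ι ℝ}
    (hA : A.IsHermitian) (j k : ι) :
    A j k = ∑ m, hA.eigenvalues m * hA.eigenvectorBasis m j * hA.eigenvectorBasis m k := by
  conv_lhs => rw [hA.spectral_theorem]
  rw [Unitary.conjStarAlgAut_apply, Matrix.mul_apply]
  refine sum_congr rfl fun m _ ↦ ?_
  simp only [Matrix.mul_diagonal, Matrix.star_apply, star_trivial, Function.comp_apply,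
    Matrix.IsHermitian.eigenvectorUnitary_apply, RCLike.ofReal_real_eq_id, id_eq]
  ring

theorem norm_toLp_contract_le {S : ι → ι → ι → ℝ} (hS : IsSymmTensor S) {A : Matrix ι ι ℝ}
    (hA : A.IsSymm) {MA MS : ℝ}
    (hMA : ∀ u w : ι → ℝ, u ⬝ᵥ u = 1 → w ⬝ᵥ w = 1 → u ⬝ᵥ (A *ᵥ w) ≤ MA)
    (hMS : ∀ z : ι → ℝ, z ⬝ᵥ z = 1 → trilinear S z z z ≤ MS) :
    ‖WithLp.toLp 2 (fun i ↦ ∑ j, ∑ k, S i j k * A j k)‖ ≤ Fintype.card ι * MA * MS := by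
  classical
  have hH : A.IsHermitian := Matrix.isHermitian_iff_isSymm.2 hA
  set e : ι → ι → ℝ := fun m ↦ hH.eigenvectorBasis m
  set lam := hH.eigenvalues
  have he : ∀ m, e m ⬝ᵥ e m = 1 := fun m ↦ by
    have : ‖WithLp.toLp 2 (e m)‖ = 1 := hH.eigenvectorBasis.norm_eq_one m
    rwa [norm_toLp_eq_sqrt_dotProduct, Real.sqrt_eq_one] at this
  have hlam : ∀ m, |lam m| ≤ MA := fun m ↦ by
    have hAe : A *ᵥ e m = lam m • e m := hH.mulVec_eigenvectorBasis m
    have hpos := hMA (e m) (e m) (he m) (he m)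
    have hneg := hMA (-e m) (e m) (by rw [neg_dotProduct, dotProduct_neg, neg_neg, he]) (he m)
    rw [hAe, dotProduct_smul, he, smul_eq_mul, mul_one] at hpos
    rw [hAe, dotProduct_smul, neg_dotProduct, he, smul_eq_mul, mul_neg, mul_one] at hneg
    exact abs_le.2 ⟨by linarith, hpos⟩
  have hdecomp : (fun i ↦ ∑ j, ∑ k, S i j k * A j k) = ∑ m, lam m • contract₂ S (e m) (e m) := by
    ext i
    simp only [hH.apply_eq_sum_eigenvalues_mul, contract₂, Finset.sum_apply, Pi.smul_apply,
      smul_eq_mul, mul_sum]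
    rw [sum_congr rfl fun j _ ↦ sum_comm, sum_comm]
    exact sum_congr rfl fun m _ ↦ sum_congr rfl fun j _ ↦ sum_congr rfl fun k _ ↦ by ring
  rw [hdecomp, WithLp.toLp_sum]
  calc ‖∑ m, WithLp.toLp 2 (lam m • contract₂ S (e m) (e m))‖
      ≤ ∑ m, ‖WithLp.toLp 2 (lam m • contract₂ S (e m) (e m))‖ := norm_sum_le _ _
    _ ≤ ∑ _m : ι, MA * MS := sum_le_sum fun m _ ↦ by
        rw [WithLp.toLp_smul, norm_smul, Real.norm_eq_abs]
        exact mul_le_mul (hlam m) (norm_toLp_contract₂_le hS hMS (he m)) (norm_nonneg _)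
          ((abs_nonneg _).trans (hlam m))
    _ = Fintype.card ι * MA * MS := by rw [sum_const, card_univ, nsmul_eq_mul, mul_assoc]

theorem abs_apply_le_one_of_sum_sq_eq_one {u : ι → ℝ} (hu : ∑ i, u i ^ 2 = 1) (i : ι) :
    |u i| ≤ 1 := by
  rw [← sq_le_one_iff_abs_le_one, ← hu]
  exact single_le_sum (fun j _ ↦ sq_nonneg (u j)) (mem_univ i)

theorem bddAbove_bilinear_unit (A : Matrix ι ι ℝ) :
    BddAbove {x | ∃ u w : ι → ℝ, ∑ i, u i ^ 2 = 1 ∧ ∑ i, w i ^ 2 = 1 ∧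
      x = ∑ i, ∑ j, u i * A i j * w j} := by
  refine ⟨∑ i, ∑ j, |A i j|, ?_⟩
  rintro _ ⟨u, w, hu, hw, rfl⟩
  gcongr with i _ j _
  calc u i * A i j * w j ≤ |u i| * |A i j| * |w j| := by
        rw [← abs_mul, ← abs_mul]; exact le_abs_self _
    _ ≤ 1 * |A i j| * 1 := by
        gcongr
        exacts [abs_apply_le_one_of_sum_sq_eq_one hu i, abs_apply_le_one_of_sum_sq_eq_one hw j]
    _ = |A i j| := by ring

theorem bddAbove_cubic_unit (S : ι → ι → ι → ℝ) :
    BddAbove {x | ∃ u : ι → ℝ, ∑ i, u i ^ 2 = 1 ∧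
      x = ∑ i, ∑ j, ∑ k, S i j k * u i * u j * u k} := by
  refine ⟨∑ i, ∑ j, ∑ k, |S i j k|, ?_⟩
  rintro _ ⟨u, hu, rfl⟩
  gcongr with i _ j _ k _
  have hle := abs_apply_le_one_of_sum_sq_eq_one hu
  calc S i j k * u i * u j * u k ≤ |S i j k| * |u i| * |u j| * |u k| := by
        rw [← abs_mul, ← abs_mul, ← abs_mul]; exact le_abs_self _
    _ ≤ |S i j k| * 1 * 1 * 1 := by gcongr <;> apply hle
    _ = |S i j k| := by ring

theorem sum_sq_eq_dotProduct (x : ι → ℝ) : ∑ i, x i ^ 2 = x ⬝ᵥ x := by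
  simp [dotProduct, sq]

/-- `‖⟨S,A⟩‖ ≤ d ‖A‖_op ‖S‖_op` for a symmetric order-3 tensor `S` and symmetric matrix `A`,
where the operator norms are expressed as suprema over (pairs of) unit vectors. -/
theorem stmt0 (d : ℕ) (S : Fin d → Fin d → Fin d → ℝ)
    (hS : ∀ i j k, S i j k = S j i k ∧ S i j k = S i k j)
    (A : Matrix (Fin d) (Fin d) ℝ) (hA : A.IsSymm) :
    Real.sqrt (∑ i, (∑ j, ∑ k, S i j k * A j k) ^ 2) ≤
      (d : ℝ) *
        sSup {x | ∃ u w : Fin d → ℝ, ∑ i, u i ^ 2 = 1 ∧ ∑ i, w i ^ 2 = 1 ∧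
          x = ∑ i, ∑ j, u i * A i j * w j} *
        sSup {x | ∃ u : Fin d → ℝ, ∑ i, u i ^ 2 = 1 ∧
          x = ∑ i, ∑ j, ∑ k, S i j k * u i * u j * u k} := by
  have hMA : ∀ u w : Fin d → ℝ, u ⬝ᵥ u = 1 → w ⬝ᵥ w = 1 → u ⬝ᵥ (A *ᵥ w) ≤
      sSup {x | ∃ u w : Fin d → ℝ, ∑ i, u i ^ 2 = 1 ∧ ∑ i, w i ^ 2 = 1 ∧
        x = ∑ i, ∑ j, u i * A i j * w j} := fun u w hu hw ↦
    le_csSup (bddAbove_bilinear_unit A) ⟨u, w, by rwa [sum_sq_eq_dotProduct],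
      by rwa [sum_sq_eq_dotProduct], by simp only [dotProduct, mulVec, mul_sum, mul_assoc]⟩
  have hMS : ∀ z : Fin d → ℝ, z ⬝ᵥ z = 1 → trilinear S z z z ≤
      sSup {x | ∃ u : Fin d → ℝ, ∑ i, u i ^ 2 = 1 ∧
        x = ∑ i, ∑ j, ∑ k, S i j k * u i * u j * u k} := fun z hz ↦
    le_csSup (bddAbove_cubic_unit S) ⟨z, by rwa [sum_sq_eq_dotProduct], rfl⟩
  have := norm_toLp_contract_le hS hA hMA hMS
  rwa [norm_toLp_eq_sqrt_dotProduct, ← sum_sq_eq_dotProduct, Fintype.card_fin] at this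
end

section
/- For a symmetric order-3 tensor S on R^d, the Frobenius norm satisfies ‖S‖_F ≤ d‖S‖_op, where ‖S‖_F² = Σ_{i,j,k} S_{ijk}² and ‖S‖_op = sup_{‖u‖=1} Σ_{i,j,k} S_{ijk} u_i u_j u_k. -/
/-!
Banach's theorem for symmetric trilinear forms: if `T w w w ≤ M` on the unit sphere, then
`T x y z ≤ M` for all unit vectors `x, y, z`. On the plane spanned by orthonormal `u, p`, the
cubic `T w w w` is a binary cubic, and a three-point quadrature on the circle writes
`a T u u u + b T p u u` (for `a² + b² = 1`) as a convex combination of its values; this bounds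
`T x u u`, and homogeneity plus polarization bound `T x y z`. Taking `x = eᵢ`, `y = ‖v‖ eⱼ`,
`z = v` for the fibre `v = (S i j k)ₖ` gives `‖v‖ ≤ M`, and summing over the `d²` fibres gives
`‖S‖_F ≤ d M`.
-/

open Real InnerProductSpace

def binaryCubic (A B C D a b : ℝ) : ℝ :=
  a ^ 3 * A + 3 * a ^ 2 * b * B + 3 * a * b ^ 2 * C + b ^ 3 * D

theorem exists_cos_sin_eq {a b : ℝ} (h : a ^ 2 + b ^ 2 = 1) : ∃ θ, cos θ = a ∧ sin θ = b := by
  have hz : ‖(⟨a, b⟩ : ℂ)‖ = 1 := by simp [Complex.norm_eq_sqrt_sq_add_sq, h]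
  have hz0 : (⟨a, b⟩ : ℂ) ≠ 0 := norm_ne_zero_iff.1 (hz ▸ one_ne_zero)
  exact ⟨Complex.arg ⟨a, b⟩, by simp [Complex.cos_arg hz0, hz], by simp [Complex.sin_arg, hz]⟩

/- The three nodes are `(cos, sin)` of `δ`, `δ + 2π/3`, `δ + 4π/3`, where `(c, s) = (cos δ, sin δ)`,
and the weights are `(4 cos² - 1)² / 9` at the nodes. -/
theorem exists_binaryCubic_quadrature (A B C D : ℝ) {c s : ℝ} (hcs : c ^ 2 + s ^ 2 = 1) :
    ∃ w a b : Fin 3 → ℝ, (∀ k, 0 ≤ w k) ∧ ∑ k, w k = 1 ∧ (∀ k, a k ^ 2 + b k ^ 2 = 1) ∧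
      (4 * c ^ 3 - 3 * c) * A + (3 * s - 4 * s ^ 3) * B =
        ∑ k, w k * binaryCubic A B C D (a k) (b k) := by
  have hr : √3 ^ 2 = 3 := sq_sqrt (by norm_num)
  obtain ⟨c₁, hc₁⟩ : ∃ x, x = -c / 2 - √3 * s / 2 := ⟨_, rfl⟩
  obtain ⟨s₁, hs₁⟩ : ∃ x, x = √3 * c / 2 - s / 2 := ⟨_, rfl⟩
  obtain ⟨c₂, hc₂⟩ : ∃ x, x = -c / 2 + √3 * s / 2 := ⟨_, rfl⟩
  obtain ⟨s₂, hs₂⟩ : ∃ x, x = -√3 * c / 2 - s / 2 := ⟨_, rfl⟩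
  refine ⟨![(4 * c ^ 2 - 1) ^ 2 / 9, (4 * c₁ ^ 2 - 1) ^ 2 / 9, (4 * c₂ ^ 2 - 1) ^ 2 / 9],
    ![c, c₁, c₂], ![s, s₁, s₂], fun k => by fin_cases k <;> simp <;> positivity, ?_,
    fun k => by fin_cases k <;> simp <;> grind, ?_⟩
  · simp only [Fin.sum_univ_three, Matrix.cons_val]
    grind
  have hA : (4 * c ^ 2 - 1) ^ 2 / 9 * c ^ 3 + (4 * c₁ ^ 2 - 1) ^ 2 / 9 * c₁ ^ 3
      + (4 * c₂ ^ 2 - 1) ^ 2 / 9 * c₂ ^ 3 = 4 * c ^ 3 - 3 * c := by grind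
  have hB : (4 * c ^ 2 - 1) ^ 2 / 9 * (c ^ 2 * s) + (4 * c₁ ^ 2 - 1) ^ 2 / 9 * (c₁ ^ 2 * s₁)
      + (4 * c₂ ^ 2 - 1) ^ 2 / 9 * (c₂ ^ 2 * s₂) = s - 4 / 3 * s ^ 3 := by grind
  have hC : (4 * c ^ 2 - 1) ^ 2 / 9 * (c * s ^ 2) + (4 * c₁ ^ 2 - 1) ^ 2 / 9 * (c₁ * s₁ ^ 2)
      + (4 * c₂ ^ 2 - 1) ^ 2 / 9 * (c₂ * s₂ ^ 2) = 0 := by grind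
  have hD : (4 * c ^ 2 - 1) ^ 2 / 9 * s ^ 3 + (4 * c₁ ^ 2 - 1) ^ 2 / 9 * s₁ ^ 3
      + (4 * c₂ ^ 2 - 1) ^ 2 / 9 * s₂ ^ 3 = 0 := by grind
  simp only [Fin.sum_univ_three, Matrix.cons_val, binaryCubic]
  linear_combination (-A) * hA - 3 * B * hB - 3 * C * hC - D * hD

theorem mul_add_mul_le_of_binaryCubic_le {A B C D M : ℝ}
    (h : ∀ a b : ℝ, a ^ 2 + b ^ 2 = 1 → binaryCubic A B C D a b ≤ M)
    {a b : ℝ} (hab : a ^ 2 + b ^ 2 = 1) : a * A + b * B ≤ M := by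
  obtain ⟨θ, rfl, rfl⟩ := exists_cos_sin_eq hab
  obtain ⟨w, a, b, hw, hw₁, hab, hquad⟩ :=
    exists_binaryCubic_quadrature A B C D (cos_sq_add_sin_sq (θ / 3))
  rw [show θ = 3 * (θ / 3) by ring, cos_three_mul, sin_three_mul, hquad]
  calc ∑ k, w k * binaryCubic A B C D (a k) (b k) ≤ ∑ k, w k * M :=
        Finset.sum_le_sum fun k _ => mul_le_mul_of_nonneg_left (h _ _ (hab k)) (hw k)
    _ = M := by rw [← Finset.sum_mul, hw₁, one_mul]

theorem norm_smul_add_smul_eq_one {E : Type*} [NormedAddCommGroup E] [InnerProductSpace ℝ E]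
    {u p : E} (hu : ‖u‖ = 1) (hp : ‖p‖ = 1) (hup : ⟪u, p⟫_ℝ = 0)
    {a b : ℝ} (hab : a ^ 2 + b ^ 2 = 1) : ‖a • u + b • p‖ = 1 := by
  have hsq : ‖a • u + b • p‖ ^ 2 = a ^ 2 + b ^ 2 := by
    simp [norm_add_sq_real, norm_smul, inner_smul_left, inner_smul_right, hup, hu, hp]
  exact (pow_eq_one_iff_of_nonneg (norm_nonneg _) two_ne_zero).1 (hsq.trans hab)

namespace LinearMap

variable {E : Type*} [NormedAddCommGroup E] [InnerProductSpace ℝ E]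
  {T : E →ₗ[ℝ] E →ₗ[ℝ] E →ₗ[ℝ] ℝ} {M : ℝ}

theorem nonneg_of_apply_self_le (hM : ∀ w, ‖w‖ = 1 → T w w w ≤ M) {x : E} (hx : ‖x‖ = 1) :
    0 ≤ M := by
  have h₁ := hM x hx
  have h₂ := hM (-x) (by rw [norm_neg, hx])
  simp only [map_neg, neg_apply, neg_neg] at h₂
  linarith

theorem smul_apply_add_smul_apply_le (h₁₂ : ∀ x y z, T x y z = T y x z)
    (h₂₃ : ∀ x y z, T x y z = T x z y) (hM : ∀ w, ‖w‖ = 1 → T w w w ≤ M)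
    {u p : E} (hu : ‖u‖ = 1) (hp : ‖p‖ = 1) (hup : ⟪u, p⟫_ℝ = 0) {a b : ℝ}
    (hab : a ^ 2 + b ^ 2 = 1) : a * T u u u + b * T p u u ≤ M := by
  refine mul_add_mul_le_of_binaryCubic_le (C := T p p u) (D := T p p p) (fun α β hαβ => ?_) hab
  have hcube := hM _ (norm_smul_add_smul_eq_one hu hp hup hαβ)
  simp only [map_add, map_smul, add_apply, smul_apply, smul_eq_mul] at hcube
  rw [h₂₃ u u p, h₁₂ u p u, h₁₂ u p p, h₂₃ p u p] at hcube
  unfold binaryCubic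
  linear_combination hcube

theorem apply_le_of_norm_eq_one (h₁₂ : ∀ x y z, T x y z = T y x z)
    (h₂₃ : ∀ x y z, T x y z = T x z y) (hM : ∀ w, ‖w‖ = 1 → T w w w ≤ M)
    {x u : E} (hx : ‖x‖ = 1) (hu : ‖u‖ = 1) : T x u u ≤ M := by
  set a := ⟪u, x⟫_ℝ
  set q := x - a • u
  have hqu : ⟪u, q⟫_ℝ = 0 := by simp [q, inner_sub_right, inner_smul_right, hu, a]
  have hxq : x = a • u + q := by simp [q]
  have hnorm : a ^ 2 + ‖q‖ ^ 2 = 1 := by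
    have h := congrArg (· ^ 2) hx
    rw [hxq, norm_add_sq_real] at h
    simpa [norm_smul, inner_smul_left, hqu, hu, mul_pow] using h
  by_cases hq : q = 0
  · -- `x = a • u` with `a ^ 2 = 1`, so `T x u u = a ^ 3 * T u u u = T x x x`
    have ha : a ^ 2 = 1 := by simpa [hq] using hnorm
    have hxx := hM x hx
    rw [hxq, hq, add_zero] at hxx ⊢
    simp only [map_smul, smul_apply, smul_eq_mul] at hxx ⊢
    linear_combination hxx - a * T u u u * ha
  · set p := ‖q‖⁻¹ • q
    have hqp : q = ‖q‖ • p := by simp [p, smul_smul, norm_ne_zero_iff.2 hq]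
    have hp : ‖p‖ = 1 := norm_smul_inv_norm hq
    have hup : ⟪u, p⟫_ℝ = 0 := by simp [p, inner_smul_right, hqu]
    have := smul_apply_add_smul_apply_le h₁₂ h₂₃ hM hu hp hup hnorm
    rw [hxq, hqp]
    simpa only [map_add, map_smul, add_apply, smul_apply, smul_eq_mul] using this

theorem apply_le_mul_norm_sq (h₁₂ : ∀ x y z, T x y z = T y x z)
    (h₂₃ : ∀ x y z, T x y z = T x z y) (hM : ∀ w, ‖w‖ = 1 → T w w w ≤ M)
    {w : E} (hw : ‖w‖ = 1) (q : E) : T w q q ≤ M * ‖q‖ ^ 2 := by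
  rcases eq_or_ne q 0 with rfl | hq
  · simp
  have hp : ‖‖q‖⁻¹ • q‖ = 1 := norm_smul_inv_norm hq
  have h := apply_le_of_norm_eq_one h₁₂ h₂₃ hM hw hp
  have hq' : ‖q‖ ≠ 0 := norm_ne_zero_iff.2 hq
  simp only [map_smul, smul_apply, smul_eq_mul] at h
  field_simp at h
  linarith

theorem apply_le_mul_norm_sq_add_norm_sq (h₁₂ : ∀ x y z, T x y z = T y x z)
    (h₂₃ : ∀ x y z, T x y z = T x z y) (hM : ∀ w, ‖w‖ = 1 → T w w w ≤ M)
    {x : E} (hx : ‖x‖ = 1) (y z : E) : T x y z ≤ M * (‖y‖ ^ 2 + ‖z‖ ^ 2) / 2 := by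
  have hplus := apply_le_mul_norm_sq h₁₂ h₂₃ hM hx (y + z)
  have hminus := apply_le_mul_norm_sq h₁₂ h₂₃ hM (w := -x) (by rw [norm_neg, hx]) (y - z)
  have hpar : ‖y + z‖ ^ 2 + ‖y - z‖ ^ 2 = 2 * (‖y‖ ^ 2 + ‖z‖ ^ 2) := by
    simpa [sq] using parallelogram_law_with_norm ℝ y z
  simp only [map_add, map_sub, map_neg, add_apply, sub_apply, neg_apply] at hplus hminus
  rw [h₂₃ x z y] at hplus hminus
  linear_combination (hplus + hminus + M * hpar) / 4

end LinearMap

section Tensor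

variable {ι : Type*} [Fintype ι] (S : ι → ι → ι → ℝ)

noncomputable def tensorForm :
    EuclideanSpace ℝ ι →ₗ[ℝ] EuclideanSpace ℝ ι →ₗ[ℝ] EuclideanSpace ℝ ι →ₗ[ℝ] ℝ :=
  ∑ i, ∑ j, ∑ k, S i j k •
    ((LinearMap.mul ℝ ℝ).compl₁₂ (EuclideanSpace.projₗ i) (EuclideanSpace.projₗ j)).compr₂
      ((LinearMap.mul ℝ ℝ).compl₂ (EuclideanSpace.projₗ k))

theorem tensorForm_apply (x y z : EuclideanSpace ℝ ι) :
    tensorForm S x y z = ∑ i, ∑ j, ∑ k, S i j k * x i * y j * z k := by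
  simp [tensorForm, LinearMap.sum_apply, mul_assoc]

variable {S}

theorem tensorForm_comm₁₂ (hS : ∀ i j k, S i j k = S j i k) (x y z : EuclideanSpace ℝ ι) :
    tensorForm S x y z = tensorForm S y x z := by
  simp only [tensorForm_apply]
  rw [Finset.sum_comm]
  refine Finset.sum_congr rfl fun i _ => Finset.sum_congr rfl fun j _ =>
    Finset.sum_congr rfl fun k _ => ?_
  rw [hS]
  ring

theorem tensorForm_comm₂₃ (hS : ∀ i j k, S i j k = S i k j) (x y z : EuclideanSpace ℝ ι) :
    tensorForm S x y z = tensorForm S x z y := by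
  simp only [tensorForm_apply]
  refine Finset.sum_congr rfl fun i _ => ?_
  rw [Finset.sum_comm]
  refine Finset.sum_congr rfl fun j _ => Finset.sum_congr rfl fun k _ => ?_
  rw [hS]
  ring

theorem tensorForm_single_single [DecidableEq ι] (i j : ι) (z : EuclideanSpace ℝ ι) :
    tensorForm S (EuclideanSpace.single i 1) (EuclideanSpace.single j 1) z =
      ∑ k, S i j k * z k := by
  simp [tensorForm_apply, PiLp.single_apply]

theorem norm_toLp_le_of_tensorForm_le (hS : ∀ i j k, S i j k = S j i k ∧ S i j k = S i k j)
    {M : ℝ} (hM : ∀ w : EuclideanSpace ℝ ι, ‖w‖ = 1 → tensorForm S w w w ≤ M) (i j : ι) :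
    ‖WithLp.toLp 2 (S i j)‖ ≤ M := by
  classical
  set v := WithLp.toLp 2 (S i j)
  have h₁₂ := tensorForm_comm₁₂ fun i j k => (hS i j k).1
  have h₂₃ := tensorForm_comm₂₃ fun i j k => (hS i j k).2
  have hv : tensorForm S (EuclideanSpace.single i 1) (EuclideanSpace.single j 1) v = ‖v‖ ^ 2 := by
    rw [tensorForm_single_single, EuclideanSpace.real_norm_sq_eq]
    simp [v, sq]
  have h := LinearMap.apply_le_mul_norm_sq_add_norm_sq h₁₂ h₂₃ hM
    (x := EuclideanSpace.single i 1) (by simp) (‖v‖ • EuclideanSpace.single j 1) v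
  simp only [map_smul, LinearMap.smul_apply, smul_eq_mul, hv, norm_smul, norm_norm,
    PiLp.norm_single, norm_one, mul_one] at h
  rcases (norm_nonneg v).eq_or_lt with hv0 | hvpos
  · exact hv0 ▸ LinearMap.nonneg_of_apply_self_le hM (x := EuclideanSpace.single i 1) (by simp)
  · exact le_of_mul_le_mul_right (by linarith) (pow_pos hvpos 2)

theorem sqrt_sum_sq_le_card_mul_of_tensorForm_le
    (hS : ∀ i j k, S i j k = S j i k ∧ S i j k = S i k j) {M : ℝ}
    (hM : ∀ w : EuclideanSpace ℝ ι, ‖w‖ = 1 → tensorForm S w w w ≤ M) :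
    √(∑ i, ∑ j, ∑ k, S i j k ^ 2) ≤ Fintype.card ι * M := by
  rcases isEmpty_or_nonempty ι with _ | ⟨⟨i₀⟩⟩
  · simp
  have hM0 : 0 ≤ M := (norm_nonneg _).trans (norm_toLp_le_of_tensorForm_le hS hM i₀ i₀)
  rw [Real.sqrt_le_iff]
  refine ⟨by positivity, ?_⟩
  calc ∑ i, ∑ j, ∑ k, S i j k ^ 2 = ∑ i, ∑ j, ‖WithLp.toLp 2 (S i j)‖ ^ 2 := by
        simp [EuclideanSpace.real_norm_sq_eq]
    _ ≤ ∑ _i : ι, ∑ _j : ι, M ^ 2 := by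
        gcongr with i _ j _
        exact norm_toLp_le_of_tensorForm_le hS hM i j
    _ = (Fintype.card ι * M) ^ 2 := by simp [Finset.sum_const]; ring

end Tensor

/-- Frobenius norm bound `‖S‖_F ≤ d ‖S‖_op` for a symmetric order-3 tensor. -/
theorem stmt1 (d : ℕ) (S : Fin d → Fin d → Fin d → ℝ)
    (hS : ∀ i j k, S i j k = S j i k ∧ S i j k = S i k j) :
    Real.sqrt (∑ i, ∑ j, ∑ k, S i j k ^ 2) ≤
      (d : ℝ) * sSup {x | ∃ u : Fin d → ℝ, ∑ i, u i ^ 2 = 1 ∧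
        x = ∑ i, ∑ j, ∑ k, S i j k * u i * u j * u k} := by
  have hset : {x | ∃ u : Fin d → ℝ, ∑ i, u i ^ 2 = 1 ∧
      x = ∑ i, ∑ j, ∑ k, S i j k * u i * u j * u k} =
      (fun w => tensorForm S w w w) '' Metric.sphere (0 : EuclideanSpace ℝ (Fin d)) 1 := by
    rw [EuclideanSpace.sphere_zero_eq 1 zero_le_one]
    ext x
    constructor
    · rintro ⟨u, hu, rfl⟩
      exact ⟨WithLp.toLp 2 u, by simpa using hu, by simp [tensorForm_apply]⟩
    · rintro ⟨w, hw, rfl⟩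
      exact ⟨w.ofLp, by simpa using hw, by simp [tensorForm_apply]⟩
  have hbdd := (isCompact_sphere (0 : EuclideanSpace ℝ (Fin d)) 1).bddAbove_image
    (f := fun w => tensorForm S w w w) (by simp_rw [tensorForm_apply]; fun_prop)
  rw [hset]
  simpa using sqrt_sum_sq_le_card_mul_of_tensorForm_le hS fun w hw =>
    le_csSup hbdd ⟨w, by simpa using hw, rfl⟩
end

section
/- If a, b, d, p > 0 with abd > p + d, then (2π)^{−d/2} ∫_{‖x‖ ≥ a√d} ‖x‖^p e^{−b√d ‖x‖} dx ≤ (ea)^p exp((p/2 + 1) log d + (3/2 + log a − ab) d). -/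
/-!
In polar coordinates the integral is `S_{d-1} ∫_{a√d}^∞ r^(d-1+p) e^(-b√d r) dr`. Concavity of
`log` gives `r^c ≤ R^c e^(c (r/R - 1))` for `r ≥ R`, which bounds such a tail by
`R^(c+1) e^(-s R)` as soon as `s R ≥ c + 1`; here `s R = abd`. The surface area
`S_{d-1} = d π^(d/2) / Γ(d/2 + 1)` is controlled by
`Γ(y + 1) ≥ ∫_y^(y+1) t^y e^(-t) dt ≥ y^y e^(-(y+1))`, after which the comparison of logarithms
reduces to `p + d ≥ 1`.
-/

open MeasureTheory Real Set Fintype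

theorem Real.rpow_mul_exp_neg_le_Gamma_add_one {y : ℝ} (hy : 0 ≤ y) :
    y ^ y * exp (-(y + 1)) ≤ Gamma (y + 1) := by
  have hint : IntegrableOn (fun x ↦ exp (-x) * x ^ y) (Ioi 0) := by
    simpa using GammaIntegral_convergent (s := y + 1) (by linarith)
  have hsub : Ioc y (y + 1) ⊆ Ioi 0 := fun x hx ↦ hy.trans_lt hx.1
  have hlow : ∀ x ∈ Ioc y (y + 1), y ^ y * exp (-(y + 1)) ≤ exp (-x) * x ^ y := fun x hx ↦ by
    rw [mul_comm]
    gcongr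
    exacts [hx.2, hx.1.le]
  calc y ^ y * exp (-(y + 1))
      = y ^ y * exp (-(y + 1)) * volume.real (Ioc y (y + 1)) := by simp
    _ ≤ ∫ x in Ioc y (y + 1), exp (-x) * x ^ y :=
        setIntegral_ge_of_const_le_real measurableSet_Ioc measure_Ioc_lt_top.ne hlow
          (hint.mono_set hsub)
    _ ≤ ∫ x in Ioi 0, exp (-x) * x ^ y :=
        setIntegral_mono_set hint
          ((ae_restrict_iff' measurableSet_Ioi).2 (.of_forall fun x (hx : 0 < x) ↦ by positivity))
          (.of_forall hsub)
    _ = Gamma (y + 1) := by rw [Gamma_eq_integral (by linarith), add_sub_cancel_right]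

theorem Real.rpow_le_rpow_mul_exp {c x y : ℝ} (hc : 0 ≤ c) (hx : 0 < x) (hy : 0 < y) :
    y ^ c ≤ x ^ c * exp (c * (y / x - 1)) := by
  have hlog : log (y / x) ≤ y / x - 1 := log_le_sub_one_of_pos (by positivity)
  rw [log_div hy.ne' hx.ne'] at hlog
  rw [rpow_def_of_pos hy, rpow_def_of_pos hx, ← exp_add, exp_le_exp]
  nlinarith [mul_le_mul_of_nonneg_left hlog hc]

theorem integral_Ioi_rpow_mul_exp_neg_mul_le {c s R : ℝ} (hR : 0 < R) (hc : 0 ≤ c)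
    (h : c + 1 ≤ s * R) :
    ∫ y in Ioi R, y ^ c * exp (-(s * y)) ≤ R ^ (c + 1) * exp (-(s * R)) := by
  have hrate : 0 < s - c / R := by
    rw [sub_pos, div_lt_iff₀ hR]; linarith
  have hdom : ∀ y ∈ Ioi R, y ^ c * exp (-(s * y)) ≤ R ^ c * exp (-c) * exp ((c / R - s) * y) :=
    fun y hy ↦ by
      calc y ^ c * exp (-(s * y)) ≤ R ^ c * exp (c * (y / R - 1)) * exp (-(s * y)) := by
            gcongr; exact rpow_le_rpow_mul_exp hc hR (hR.trans hy)
        _ = R ^ c * exp (-c) * exp ((c / R - s) * y) := by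
            rw [mul_assoc, mul_assoc, ← exp_add, ← exp_add]; ring_nf
  calc ∫ y in Ioi R, y ^ c * exp (-(s * y))
      ≤ ∫ y in Ioi R, R ^ c * exp (-c) * exp ((c / R - s) * y) := by
        refine setIntegral_mono_of_nonneg (fun y (hy : R < y) ↦ ?_) hdom
          ((integrableOn_exp_mul_Ioi (by linarith) R).const_mul _)
        have := hR.trans hy
        positivity
    _ = R ^ c * exp (-(s * R)) / (s - c / R) := by
        have hexp : exp (-c) * exp ((c / R - s) * R) = exp (-(s * R)) := by
          rw [← exp_add]; field_simp; ring_nf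
        rw [integral_const_mul, integral_exp_mul_Ioi (by linarith), neg_div, ← div_neg, neg_sub,
          ← hexp]
        ring
    _ ≤ R ^ (c + 1) * exp (-(s * R)) := by
        have hRrate : 1 ≤ R * (s - c / R) := by rw [mul_sub, mul_div_cancel₀ _ hR.ne']; linarith
        rw [div_le_iff₀ hrate, rpow_add_one hR.ne']
        linarith [le_mul_of_one_le_right (by positivity : 0 ≤ R ^ c * exp (-(s * R))) hRrate]

theorem integral_fun_sqrt_sum_sq {ι : Type*} [Fintype ι] [Nonempty ι] (f : ℝ → ℝ) :
    ∫ x : ι → ℝ, f √(∑ i, x i ^ 2) =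
      card ι * (√π ^ card ι / Gamma (card ι / 2 + 1)) * ∫ r in Ioi 0, r ^ (card ι - 1) * f r := by
  have hnorm (y : EuclideanSpace ℝ ι) : √(∑ i, y.ofLp i ^ 2) = ‖y‖ := by
    simp [EuclideanSpace.norm_eq]
  rw [← (EuclideanSpace.volume_preserving_symm_measurableEquiv_toLp ι).integral_comp'
    (fun x : ι → ℝ ↦ f √(∑ i, x i ^ 2))]
  simp only [MeasurableEquiv.toLp_symm_apply, hnorm]
  rw [integral_fun_norm_addHaar, finrank_euclideanSpace, measureReal_def,
    EuclideanSpace.volume_ball]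
  simp only [ENNReal.ofReal_one, one_pow, one_mul, smul_eq_mul, nsmul_eq_mul]
  rw [ENNReal.toReal_ofReal (by positivity), mul_assoc]

theorem setIntegral_fun_sqrt_sum_sq_Ici {ι : Type*} [Fintype ι] [Nonempty ι] {R : ℝ} (hR : 0 < R)
    (g : ℝ → ℝ) :
    ∫ x in {x : ι → ℝ | R ≤ √(∑ i, x i ^ 2)}, g √(∑ i, x i ^ 2) =
      card ι * (√π ^ card ι / Gamma (card ι / 2 + 1)) * ∫ r in Ioi R, r ^ (card ι - 1) * g r := by
  have hmeas : MeasurableSet {x : ι → ℝ | R ≤ √(∑ i, x i ^ 2)} :=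
    measurableSet_le measurable_const (by fun_prop)
  have hIci : Ioi 0 ∩ Ici R = Ici R := inter_eq_right.2 fun r hr ↦ hR.trans_le hr
  rw [← integral_indicator hmeas, ← integral_Ici_eq_integral_Ioi, ← hIci,
    ← setIntegral_indicator measurableSet_Ici]
  simp_rw [indicator_mul_right]
  exact integral_fun_sqrt_sum_sq ((Ici R).indicator g)

theorem gaussian_tail_prefactor_le {d : ℕ} (hd : 0 < d) {a p : ℝ} (ha : 0 < a) (hp : 0 ≤ p)
    (b : ℝ) :
    (2 * π) ^ (-(d : ℝ) / 2) * (d * (√π ^ d / Gamma (d / 2 + 1)) *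
        ((a * √d) ^ ((d : ℝ) + p) * exp (-(a * b * d))))
      ≤ (exp 1 * a) ^ p * exp ((p / 2 + 1) * log d + (3 / 2 + log a - a * b) * d) := by
  have hd0 : (0 : ℝ) < d := by exact_mod_cast hd
  have hd1 : (1 : ℝ) ≤ d := by exact_mod_cast hd
  have hGamma : (d / 2 : ℝ) * (log d - log 2) - (d / 2 + 1) ≤ log (Gamma (d / 2 + 1)) := by
    have h := log_le_log (by positivity)
      (rpow_mul_exp_neg_le_Gamma_add_one (y := d / 2) (by positivity))
    rwa [log_mul (by positivity) (exp_pos _).ne', log_rpow (by positivity), log_exp,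
      log_div hd0.ne' two_ne_zero] at h
  rw [← log_le_log_iff (by positivity) (by positivity)]
  simp (disch := positivity) only [log_mul, log_div, log_rpow, log_pow, log_sqrt, log_exp]
  linarith

theorem stmt8_general (d : ℕ) (a b p : ℝ) (hd : 0 < d) (ha : 0 < a) (hp : 0 < p)
    (h : a * b * d > p + d) :
    (2 * Real.pi) ^ (-(d : ℝ) / 2) *
        ∫ x : Fin d → ℝ in {x | a * Real.sqrt d ≤ Real.sqrt (∑ i, x i ^ 2)},
          (Real.sqrt (∑ i, x i ^ 2)) ^ p * Real.exp (-(b * Real.sqrt d * Real.sqrt (∑ i, x i ^ 2)))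
      ≤ (Real.exp 1 * a) ^ p *
          Real.exp ((p / 2 + 1) * Real.log d + (3 / 2 + Real.log a - a * b) * d) := by
  have : Nonempty (Fin d) := ⟨⟨0, hd⟩⟩
  have hd0 : (0 : ℝ) < d := by exact_mod_cast hd
  have hd1 : (1 : ℝ) ≤ d := by exact_mod_cast hd
  have hR : 0 < a * √d := by positivity
  have hsR : b * √d * (a * √d) = a * b * d := by
    rw [mul_mul_mul_comm, mul_self_sqrt hd0.le]; ring
  have htail : ∫ r in Ioi (a * √d), r ^ (d - 1) * (r ^ p * exp (-(b * √d * r)))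
      ≤ (a * √d) ^ ((d : ℝ) + p) * exp (-(a * b * d)) := by
    have hpow : ∀ r ∈ Ioi (a * √d), r ^ (d - 1) * (r ^ p * exp (-(b * √d * r)))
        = r ^ ((d : ℝ) - 1 + p) * exp (-(b * √d * r)) := fun r hr ↦ by
      rw [rpow_add (hR.trans hr), ← rpow_natCast, Nat.cast_sub hd, Nat.cast_one, ← mul_assoc]
    have hbound := integral_Ioi_rpow_mul_exp_neg_mul_le (c := (d : ℝ) - 1 + p) hR
      (by linarith) (by rw [hsR]; linarith)
    rw [setIntegral_congr_fun measurableSet_Ioi hpow]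
    rwa [show (d : ℝ) - 1 + p + 1 = d + p by ring, hsR] at hbound
  rw [setIntegral_fun_sqrt_sum_sq_Ici hR fun r ↦ r ^ p * exp (-(b * √d * r)), card_fin]
  calc _ ≤ (2 * π) ^ (-(d : ℝ) / 2) * (d * (√π ^ d / Gamma (d / 2 + 1)) *
        ((a * √d) ^ ((d : ℝ) + p) * exp (-(a * b * d)))) := by gcongr
    _ ≤ _ := gaussian_tail_prefactor_le hd ha hp.le b

/-- If `abd > p + d`, then
`(2π)^{−d/2} ∫_{‖x‖ ≥ a√d} ‖x‖^p e^{−b√d‖x‖} dx ≤ (ea)^p exp((p/2+1) log d + (3/2 + log a − ab) d)`. -/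
theorem stmt8 (d : ℕ) (a b p : ℝ) (hd : 0 < d) (ha : 0 < a) (hb : 0 < b) (hp : 0 < p)
    (h : a * b * d > p + d) :
    (2 * Real.pi) ^ (-(d : ℝ) / 2) *
        ∫ x : Fin d → ℝ in {x | a * Real.sqrt d ≤ Real.sqrt (∑ i, x i ^ 2)},
          (Real.sqrt (∑ i, x i ^ 2)) ^ p * Real.exp (-(b * Real.sqrt d * Real.sqrt (∑ i, x i ^ 2)))
      ≤ (Real.exp 1 * a) ^ p *
          Real.exp ((p / 2 + 1) * Real.log d + (3 / 2 + Real.log a - a * b) * d) :=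
  stmt8_general d a b p hd ha hp h
end

section
/- Let R ≥ max(4a²b, √2·a) with a, b > 0. Then (2π)^{−d/2} ∫_{‖x‖ ≥ R√d} exp(b√d‖x‖ − ‖x‖²/(2a²)) dx ≤ exp((d/2)[log(2a²) − (R/(√2 a) − 1)²]). -/
open MeasureTheory Real

/-!
On the region `‖x‖ ≥ R√d`, the condition `R ≥ 4a²b` makes the linear term at most half of the
quadratic one, so the integrand is at most `exp(-‖x‖²/(4a²))`. As `R ≥ √2·a`, one may split
`1/(4a²) = 1/(2R²) + λ` with `λ ≥ 0`; bounding `λ‖x‖² ≥ λR²d` (a Chernoff bound) dominates the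
integrand by `exp(-λR²d)·exp(-‖x‖²/(2R²))`, whose integral over all of `ℝ^d` is
`exp(-λR²d)·(2πR²)^{d/2}`. With `u = R/(√2·a)` the remaining inequality is `log u ≤ u - 1`.
-/

section Gaussian

variable {ι : Type*} [Fintype ι] {k : ℝ}

lemma exp_neg_mul_sum_sq_eq_prod (k : ℝ) (x : ι → ℝ) :
    exp (-k * ∑ i, x i ^ 2) = ∏ i, exp (-k * x i ^ 2) := by
  rw [← exp_sum, Finset.mul_sum]

lemma integrable_exp_neg_mul_sum_sq (hk : 0 < k) :
    Integrable fun x : ι → ℝ => exp (-k * ∑ i, x i ^ 2) :=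
  (Integrable.fintype_prod fun _ => integrable_exp_neg_mul_sq hk).congr
    (ae_of_all _ fun x => (exp_neg_mul_sum_sq_eq_prod k x).symm)

lemma integral_exp_neg_mul_sum_sq (hk : 0 < k) :
    ∫ x : ι → ℝ, exp (-k * ∑ i, x i ^ 2) = (π / k) ^ (Fintype.card ι / 2 : ℝ) := by
  simp_rw [exp_neg_mul_sum_sq_eq_prod]
  rw [integral_fintype_prod_volume_eq_pow fun y : ℝ => exp (-k * y ^ 2), integral_gaussian,
    sqrt_eq_rpow, ← rpow_mul_natCast (div_pos pi_pos hk).le]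
  ring_nf

end Gaussian

lemma tail_exponent_le {a b R s r : ℝ} (ha : 0 < a) (hR : 0 < R) (hab : 4 * a ^ 2 * b ≤ R)
    (haR : 2 * a ^ 2 ≤ R ^ 2) (hs : 0 ≤ s) (hr : R * s ≤ r) :
    b * s * r - r ^ 2 / (2 * a ^ 2) ≤
      -(R ^ 2 / (4 * a ^ 2) - 1 / 2) * s ^ 2 - r ^ 2 / (2 * R ^ 2) := by
  set gap := 1 / (4 * a ^ 2) - 1 / (2 * R ^ 2)
  have hr0 : 0 ≤ r := (mul_nonneg hR.le hs).trans hr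
  have hlin : b * s * r ≤ r ^ 2 / (4 * a ^ 2) := by
    rw [le_div_iff₀ (by positivity)]
    nlinarith [mul_le_mul_of_nonneg_right ((mul_le_mul_of_nonneg_right hab hs).trans hr) hr0]
  have hgap : 0 ≤ gap := sub_nonneg.2 (one_div_le_one_div_of_le (by positivity) (by linarith))
  have hsq : (R * s) ^ 2 ≤ r ^ 2 := pow_le_pow_left₀ (by positivity) hr 2
  have hchernoff : gap * (R * s) ^ 2 ≤ gap * r ^ 2 := mul_le_mul_of_nonneg_left hsq hgap
  have hsplit : r ^ 2 / (4 * a ^ 2) = gap * r ^ 2 + r ^ 2 / (2 * R ^ 2) := by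
    simp only [gap]; field_simp; ring
  have hscale : gap * (R * s) ^ 2 = (R ^ 2 / (4 * a ^ 2) - 1 / 2) * s ^ 2 := by
    simp only [gap]; field_simp
  have hhalf : r ^ 2 / (2 * a ^ 2) = 2 * (r ^ 2 / (4 * a ^ 2)) := by field_simp; ring
  linarith

lemma log_sub_sq_div_add_half_le {a R : ℝ} (ha : 0 < a) (hR : 0 < R) :
    log R - R ^ 2 / (4 * a ^ 2) + 1 / 2 ≤ (log (2 * a ^ 2) - (R / (√2 * a) - 1) ^ 2) / 2 := by
  set u := R / (√2 * a) with hu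
  have hu0 : 0 < u := by positivity
  have hRu : R = √2 * a * u := by rw [hu]; field_simp
  have hsq : (√2 * a) ^ 2 = 2 * a ^ 2 := by rw [mul_pow, sq_sqrt zero_le_two]
  have hlog : log R = log (2 * a ^ 2) / 2 + log u := by
    rw [hRu, log_mul (by positivity) hu0.ne', ← hsq, log_pow]; push_cast; ring
  have hR2 : R ^ 2 / (4 * a ^ 2) = u ^ 2 / 2 := by
    rw [hRu, mul_pow, hsq]; field_simp; ring
  rw [hlog, hR2]
  nlinarith [log_le_sub_one_of_pos hu0]

lemma setIntegral_tail_le {d : ℕ} {a b R : ℝ} (ha : 0 < a) (hR : 0 < R)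
    (hab : 4 * a ^ 2 * b ≤ R) (haR : 2 * a ^ 2 ≤ R ^ 2) :
    ∫ x : Fin d → ℝ in {x | R * √d ≤ √(∑ i, x i ^ 2)},
        exp (b * √d * √(∑ i, x i ^ 2) - (∑ i, x i ^ 2) / (2 * a ^ 2))
      ≤ exp (-(R ^ 2 / (4 * a ^ 2) - 1 / 2) * d) * (2 * π * R ^ 2) ^ (d / 2 : ℝ) := by
  set S : Set (Fin d → ℝ) := {x | R * √d ≤ √(∑ i, x i ^ 2)}
  set C := exp (-(R ^ 2 / (4 * a ^ 2) - 1 / 2) * d)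
  have hk : 0 < 1 / (2 * R ^ 2) := by positivity
  have hdom : ∀ x ∈ S, exp (b * √d * √(∑ i, x i ^ 2) - (∑ i, x i ^ 2) / (2 * a ^ 2))
      ≤ C * exp (-(1 / (2 * R ^ 2)) * ∑ i, x i ^ 2) := by
    intro x hx
    have := tail_exponent_le ha hR hab haR (sqrt_nonneg d) hx
    rw [sq_sqrt (by positivity), sq_sqrt d.cast_nonneg] at this
    rw [← exp_add]
    exact exp_le_exp.2 (this.trans_eq (by ring))
  have hgauss := (integrable_exp_neg_mul_sum_sq (ι := Fin d) hk).const_mul C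
  calc _ ≤ ∫ x in S, C * exp (-(1 / (2 * R ^ 2)) * ∑ i, x i ^ 2) :=
        integral_mono_of_nonneg (ae_of_all _ fun _ => (exp_pos _).le) hgauss.integrableOn
          (ae_restrict_of_forall_mem (measurableSet_le measurable_const (by fun_prop)) hdom)
    _ ≤ ∫ x : Fin d → ℝ, C * exp (-(1 / (2 * R ^ 2)) * ∑ i, x i ^ 2) :=
        setIntegral_le_integral hgauss (ae_of_all _ fun _ => by positivity)
    _ = C * (2 * π * R ^ 2) ^ (d / 2 : ℝ) := by
        rw [integral_const_mul, integral_exp_neg_mul_sum_sq hk, Fintype.card_fin]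
        field_simp

theorem stmt9_general (d : ℕ) (a b R : ℝ) (ha : 0 < a)
    (hR : max (4 * a ^ 2 * b) (Real.sqrt 2 * a) ≤ R) :
    (2 * Real.pi) ^ (-(d : ℝ) / 2) *
        ∫ x : Fin d → ℝ in {x | R * Real.sqrt d ≤ Real.sqrt (∑ i, x i ^ 2)},
          Real.exp (b * Real.sqrt d * Real.sqrt (∑ i, x i ^ 2) - (∑ i, x i ^ 2) / (2 * a ^ 2))
      ≤ Real.exp ((d / 2) * (Real.log (2 * a ^ 2) - (R / (Real.sqrt 2 * a) - 1) ^ 2)) := by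
  obtain ⟨hab, haR⟩ := max_le_iff.1 hR
  have hR0 : 0 < R := (by positivity : 0 < √2 * a).trans_le haR
  have haR2 : 2 * a ^ 2 ≤ R ^ 2 := by
    simpa only [mul_pow, sq_sqrt zero_le_two] using pow_le_pow_left₀ (by positivity) haR 2
  have hR2 : (R ^ 2) ^ (d / 2 : ℝ) = exp (d * log R) := by
    rw [rpow_def_of_pos (by positivity), log_pow]; push_cast; ring_nf
  calc _ ≤ (2 * π) ^ (-(d : ℝ) / 2) *
        (exp (-(R ^ 2 / (4 * a ^ 2) - 1 / 2) * d) * (2 * π * R ^ 2) ^ (d / 2 : ℝ)) :=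
        mul_le_mul_of_nonneg_left (setIntegral_tail_le ha hR0 hab haR2) (by positivity)
    _ = exp (d * (log R - R ^ 2 / (4 * a ^ 2) + 1 / 2)) := by
        rw [mul_rpow (by positivity : (0 : ℝ) ≤ 2 * π) (sq_nonneg R), hR2, neg_div,
          rpow_neg (by positivity), mul_left_comm (exp _), inv_mul_cancel_left₀ (by positivity),
          ← exp_add]
        ring_nf
    _ ≤ _ := exp_le_exp.2 (by nlinarith [log_sub_sq_div_add_half_le ha hR0, d.cast_nonneg (α := ℝ)])

/-- If `R ≥ max(4a²b, √2·a)` with `a, b > 0`, then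
`(2π)^{−d/2} ∫_{‖x‖ ≥ R√d} exp(b√d‖x‖ − ‖x‖²/(2a²)) dx
  ≤ exp((d/2)[log(2a²) − (R/(√2·a) − 1)²])`. -/
theorem stmt9 (d : ℕ) (a b R : ℝ) (ha : 0 < a) (hb : 0 < b)
    (hR : max (4 * a ^ 2 * b) (Real.sqrt 2 * a) ≤ R) :
    (2 * Real.pi) ^ (-(d : ℝ) / 2) *
        ∫ x : Fin d → ℝ in {x | R * Real.sqrt d ≤ Real.sqrt (∑ i, x i ^ 2)},
          Real.exp (b * Real.sqrt d * Real.sqrt (∑ i, x i ^ 2) - (∑ i, x i ^ 2) / (2 * a ^ 2))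
      ≤ Real.exp ((d / 2) * (Real.log (2 * a ^ 2) - (R / (Real.sqrt 2 * a) - 1) ^ 2)) :=
  stmt9_general d a b R ha hR
end

section
/- Let v ∈ C⁴(R^d) be convex with unique minimizer x̂ and H_v = ∇²v(x̂) ≻ 0. Define c₃ = ‖∇³v(x̂)‖_{H_v} and c₄(R) = sup{‖∇⁴v(x)‖_{H_v} : ‖x − x̂‖_{H_v} ≤ R√(d/n)}. If c₃ d/√n ≤ 1 and c₄(R₀) d²/n ≤ 1 for some constant R₀ ≤ √d, then v(x) − v(x̂) ≥ (R₀/4)√(d/n) ‖x − x̂‖_{H_v} for all x with ‖x − x̂‖_{H_v} ≥ R₀√(d/n). -/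
/-!
Put `u = x - x̂`, `s = ‖u‖_H ≥ r = R₀√(d/n)` and `t = r / s ≤ 1`. As `x̂` is a critical point,
Taylor's theorem along the segment gives
`v(x̂ + t u) - v(x̂) = r²/2 + t³ ∇³v(x̂)[u³]/6 + t⁴ ∇⁴v(x̂ + ξ u)[u⁴]/24` with `‖ξ u‖_H ≤ r`.
The conditions on `c₃` and `c₄` say exactly that `c₃ r ≤ 1` and `c₄ r² ≤ 1`, so both error terms
are at most `r²` in absolute value and the increment is at least `(1/2 - 1/6 - 1/24) r² ≥ r²/4`.
Convexity of `t ↦ v(x̂ + t u)` turns this into `v(x) - v(x̂) ≥ (r²/4) / t = r s / 4`.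
-/

open Set

section Taylor

variable {E F : Type*} [NormedAddCommGroup E] [NormedSpace ℝ E]
  [NormedAddCommGroup F] [NormedSpace ℝ F]

theorem iteratedDeriv_comp_add_smul {n : WithTop ℕ∞} {v : E → F} (hv : ContDiff ℝ n v)
    (a u : E) {k : ℕ} (hk : k ≤ n) (t : ℝ) :
    iteratedDeriv k (fun t : ℝ => v (a + t • u)) t =
      iteratedFDeriv ℝ k v (a + t • u) (fun _ => u) := by
  have hline : (fun t : ℝ => v (a + t • u)) =
      (fun z => v (a + z)) ∘ ContinuousLinearMap.toSpanSingleton ℝ u := rfl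
  have hshift : ContDiff ℝ n fun z => v (a + z) := hv.comp (contDiff_const.add contDiff_id)
  rw [iteratedDeriv_eq_iteratedFDeriv, hline,
    ContinuousLinearMap.iteratedFDeriv_comp_right _ hshift t hk]
  simp [iteratedFDeriv_comp_add_left]

theorem taylor_mean_remainder_lagrange_add_smul {n : ℕ} {v : E → ℝ} (hv : ContDiff ℝ (n + 1) v)
    (a u : E) {t : ℝ} (ht : 0 < t) :
    ∃ ξ ∈ Ioo 0 t, v (a + t • u) =
      ∑ k ∈ Finset.range (n + 1), t ^ k / k.factorial * iteratedFDeriv ℝ k v a (fun _ => u) +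
        t ^ (n + 1) / (n + 1).factorial * iteratedFDeriv ℝ (n + 1) v (a + ξ • u) (fun _ => u) := by
  have hg : ContDiff ℝ (n + 1) fun t : ℝ => v (a + t • u) :=
    hv.comp (contDiff_const.add (contDiff_id.smul contDiff_const))
  obtain ⟨ξ, hξ, hrem⟩ := taylor_mean_remainder_lagrange_iteratedDeriv ht.ne hg.contDiffOn
  rw [uIoo_of_le ht.le] at hξ
  refine ⟨ξ, hξ, ?_⟩
  rw [taylor_within_apply, uIcc_of_le ht.le, iteratedDeriv_comp_add_smul hv a u le_rfl] at hrem
  simp only [sub_zero] at hrem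
  have hcoef : ∀ k ∈ Finset.range (n + 1),
      ((k.factorial : ℝ)⁻¹ * t ^ k) •
          iteratedDerivWithin k (fun t : ℝ => v (a + t • u)) (Icc 0 t) 0 =
        t ^ k / k.factorial * iteratedFDeriv ℝ k v a (fun _ => u) := by
    intro k hk
    have hkn : (k : WithTop ℕ∞) ≤ n + 1 := by exact_mod_cast (Finset.mem_range.mp hk).le
    rw [iteratedDerivWithin_eq_iteratedDeriv (uniqueDiffOn_Icc ht) (hg.contDiffAt.of_le hkn)
      (left_mem_Icc.mpr ht.le), iteratedDeriv_comp_add_smul hv a u hkn]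
    simp [div_eq_inv_mul]
  rw [Finset.sum_congr rfl hcoef] at hrem
  linear_combination hrem

theorem sq_mul_div_four_le_sub_of_abs_iteratedFDeriv_le {v : E → ℝ} (hv : ContDiff ℝ 4 v)
    {a u : E} (hcrit : fderiv ℝ v a = 0)
    {s t c₃ c₄ : ℝ} (ht : 0 < t) (h₂ : iteratedFDeriv ℝ 2 v a (fun _ => u) = s ^ 2)
    (h₃ : |iteratedFDeriv ℝ 3 v a (fun _ => u)| ≤ c₃ * s ^ 3)
    (h₄ : ∀ ξ ∈ Ioo 0 t, |iteratedFDeriv ℝ 4 v (a + ξ • u) (fun _ => u)| ≤ c₄ * s ^ 4)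
    (hc₃ : c₃ * (t * s) ≤ 1) (hc₄ : c₄ * (t * s) ^ 2 ≤ 1) :
    (t * s) ^ 2 / 4 ≤ v (a + t • u) - v a := by
  obtain ⟨ξ, hξ, htaylor⟩ := taylor_mean_remainder_lagrange_add_smul (n := 3) hv a u ht
  simp only [Finset.sum_range_succ, Finset.sum_range_zero, iteratedFDeriv_zero_apply,
    iteratedFDeriv_one_apply, hcrit, h₂] at htaylor
  have hsq : 0 ≤ (t * s) ^ 2 := sq_nonneg _
  have hb₃ : |t ^ 3 * iteratedFDeriv ℝ 3 v a (fun _ => u)| ≤ (t * s) ^ 2 :=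
    calc _ ≤ t ^ 3 * (c₃ * s ^ 3) := by
          rw [abs_mul, abs_of_pos (pow_pos ht 3)]; gcongr
      _ = c₃ * (t * s) * (t * s) ^ 2 := by ring
      _ ≤ (t * s) ^ 2 := mul_le_of_le_one_left hsq hc₃
  have hb₄ : |t ^ 4 * iteratedFDeriv ℝ 4 v (a + ξ • u) (fun _ => u)| ≤ (t * s) ^ 2 :=
    calc _ ≤ t ^ 4 * (c₄ * s ^ 4) := by
          rw [abs_mul, abs_of_pos (pow_pos ht 4)]; gcongr; exact h₄ ξ hξ
      _ = c₄ * (t * s) ^ 2 * (t * s) ^ 2 := by ring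
      _ ≤ (t * s) ^ 2 := mul_le_of_le_one_left hsq hc₄
  norm_num [Nat.factorial] at htaylor
  linarith [(abs_le.mp hb₃).1, (abs_le.mp hb₄).1]

end Taylor

section WeightedNorm

variable {E : Type*} [NormedAddCommGroup E] [NormedSpace ℝ E]

/-- With `q = ∇²v(x̂)` this is the paper's `‖y‖_H`; the suprema
`sSup {t | ∃ u, q u = 1 ∧ t = |T u|}` below are its weighted tensor norms `‖T‖_H`. -/
noncomputable def weightedNorm (q : ContinuousMultilinearMap ℝ (fun _ : Fin 2 => E) ℝ)
    (y : E) : ℝ :=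
  √(q fun _ => y)

theorem ContinuousMultilinearMap.apply_smul_diag {k : ℕ}
    (T : ContinuousMultilinearMap ℝ (fun _ : Fin k => E) ℝ) (c : ℝ) (y : E) :
    T (fun _ => c • y) = c ^ k * T (fun _ => y) := by
  simpa using T.map_smul_univ (fun _ => c) (fun _ => y)

variable (q : ContinuousMultilinearMap ℝ (fun _ : Fin 2 => E) ℝ)

theorem continuous_weightedNorm : Continuous (weightedNorm q) :=
  (q.cont.comp (continuous_pi fun _ => continuous_id)).sqrt

theorem weightedNorm_smul (c : ℝ) (y : E) : weightedNorm q (c • y) = |c| * weightedNorm q y := by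
  rw [weightedNorm, weightedNorm, q.apply_smul_diag, Real.sqrt_mul (sq_nonneg c),
    Real.sqrt_sq_eq_abs]

theorem exists_pos_mul_norm_le_weightedNorm [FiniteDimensional ℝ E]
    (hq : ∀ y ≠ 0, 0 < q fun _ => y) : ∃ m > 0, ∀ y : E, m * ‖y‖ ≤ weightedNorm q y := by
  rcases subsingleton_or_nontrivial E with hE | hE
  · exact ⟨1, one_pos, fun y => by simp [Subsingleton.elim y 0, weightedNorm]⟩
  obtain ⟨y₀, hy₀, hmin⟩ := (isCompact_sphere (0 : E) 1).exists_isMinOn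
    (NormedSpace.sphere_nonempty.mpr zero_le_one) (continuous_weightedNorm q).continuousOn
  have hy₀ne : y₀ ≠ 0 := ne_zero_of_mem_unit_sphere ⟨y₀, hy₀⟩
  refine ⟨weightedNorm q y₀, Real.sqrt_pos.mpr (hq y₀ hy₀ne), fun y => ?_⟩
  rcases eq_or_ne y 0 with rfl | hy
  · simp [weightedNorm]
  have hunit : ‖y‖⁻¹ • y ∈ Metric.sphere (0 : E) 1 := by
    simp [norm_smul, hy]
  have := hmin hunit
  rw [mem_ofPred_eq, weightedNorm_smul, abs_inv, abs_norm] at this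
  rwa [le_inv_mul_iff₀ (norm_pos_iff.mpr hy), mul_comm] at this

theorem isCompact_setOf_weightedNorm_sub_le [FiniteDimensional ℝ E]
    (hq : ∀ y ≠ 0, 0 < q fun _ => y) (a : E) (ρ : ℝ) :
    IsCompact {y | weightedNorm q (y - a) ≤ ρ} := by
  obtain ⟨m, hm, hmq⟩ := exists_pos_mul_norm_le_weightedNorm q hq
  refine Metric.isCompact_of_isClosed_isBounded
    (isClosed_le ((continuous_weightedNorm q).comp (continuous_id.sub continuous_const))
      continuous_const) ((Metric.isBounded_closedBall (x := a) (r := ρ / m)).subset ?_)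
  intro y hy
  rw [Metric.mem_closedBall, dist_eq_norm, le_div_iff₀ hm, mul_comm]
  exact (hmq _).trans hy

theorem isCompact_setOf_eq_one [FiniteDimensional ℝ E] (hq : ∀ y ≠ 0, 0 < q fun _ => y) :
    IsCompact {y : E | (q fun _ => y) = 1} := by
  refine (isCompact_setOf_weightedNorm_sub_le q hq 0 1).of_isClosed_subset
    (isClosed_eq (q.cont.comp (continuous_pi fun _ => continuous_id)) continuous_const) ?_
  intro y (hy : (q fun _ => y) = 1)
  simp [weightedNorm, hy]

theorem abs_apply_diag_le_mul_weightedNorm_pow {k : ℕ}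
    (T : ContinuousMultilinearMap ℝ (fun _ : Fin k => E) ℝ) {c : ℝ}
    (hT : ∀ w, (q fun _ => w) = 1 → |T fun _ => w| ≤ c) {y : E} (hy : 0 < q fun _ => y) :
    |T fun _ => y| ≤ c * weightedNorm q y ^ k := by
  have hN : 0 < weightedNorm q y := Real.sqrt_pos.mpr hy
  have hunit : (q fun _ => (weightedNorm q y)⁻¹ • y) = 1 := by
    rw [q.apply_smul_diag, inv_pow, weightedNorm, Real.sq_sqrt hy.le, inv_mul_cancel₀ hy.ne']
  have := hT _ hunit
  rw [T.apply_smul_diag, abs_mul, abs_pow, abs_inv, abs_of_pos hN, inv_pow,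
    inv_mul_le_iff₀ (pow_pos hN k)] at this
  linarith

variable {q}

theorem abs_apply_diag_le_sSup_mul_weightedNorm_pow [FiniteDimensional ℝ E]
    (hq : ∀ y ≠ 0, 0 < q fun _ => y) {k : ℕ}
    (T : ContinuousMultilinearMap ℝ (fun _ : Fin k => E) ℝ) {y : E} (hy : 0 < q fun _ => y) :
    |T fun _ => y| ≤
      sSup {t | ∃ u, (q fun _ => u) = 1 ∧ t = |T fun _ => u|} * weightedNorm q y ^ k := by
  have hbdd : BddAbove {t | ∃ u, (q fun _ => u) = 1 ∧ t = |T fun _ => u|} :=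
    ((isCompact_setOf_eq_one q hq).image
      (T.cont.comp (continuous_pi fun _ => continuous_id)).abs).bddAbove.mono
      (by rintro _ ⟨u, hu, rfl⟩; exact ⟨u, hu, rfl⟩)
  exact abs_apply_diag_le_mul_weightedNorm_pow q T (fun w hw => le_csSup hbdd ⟨w, hw, rfl⟩) hy

theorem abs_apply_diag_le_sSup_mul_weightedNorm_pow_of_mem [FiniteDimensional ℝ E]
    (hq : ∀ y ≠ 0, 0 < q fun _ => y) {k : ℕ}
    {F : E → ContinuousMultilinearMap ℝ (fun _ : Fin k => E) ℝ} (hF : Continuous F)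
    {a x : E} {ρ : ℝ} (hx : weightedNorm q (x - a) ≤ ρ) {y : E} (hy : 0 < q fun _ => y) :
    |F x fun _ => y| ≤ sSup {t | ∃ x u, weightedNorm q (x - a) ≤ ρ ∧ (q fun _ => u) = 1 ∧
        t = |F x fun _ => u|} * weightedNorm q y ^ k := by
  have hbdd : BddAbove {t | ∃ x u, weightedNorm q (x - a) ≤ ρ ∧ (q fun _ => u) = 1 ∧
      t = |F x fun _ => u|} :=
    (((isCompact_setOf_weightedNorm_sub_le q hq a ρ).prod (isCompact_setOf_eq_one q hq)).image
      (continuous_eval.comp ((hF.comp continuous_fst).prodMk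
        (continuous_pi fun _ => continuous_snd))).abs).bddAbove.mono
      (by rintro _ ⟨x, u, hx, hu, rfl⟩; exact ⟨(x, u), ⟨hx, hu⟩, rfl⟩)
  exact abs_apply_diag_le_mul_weightedNorm_pow q (F x)
    (fun w hw => le_csSup hbdd ⟨x, w, hx, hw, rfl⟩) hy

end WeightedNorm

theorem ConvexOn.sub_le_mul_sub {E : Type*} [AddCommGroup E] [Module ℝ E] {v : E → ℝ}
    (hv : ConvexOn ℝ univ v) (a x : E) {t : ℝ} (h₀ : 0 ≤ t) (h₁ : t ≤ 1) :
    v (a + t • (x - a)) - v a ≤ t * (v x - v a) := by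
  have hpoint : a + t • (x - a) = (1 - t) • a + t • x := by
    rw [smul_sub, sub_smul, one_smul]; abel
  have := hv.2 (mem_univ a) (mem_univ x) (sub_nonneg.mpr h₁) h₀ (by ring)
  rw [hpoint]
  simp only [smul_eq_mul] at this
  linarith

theorem mul_sqrt_div_le_div_sqrt {R d n : ℝ} (hd : 0 ≤ d) (hR : R ≤ √d) :
    R * √(d / n) ≤ d / √n :=
  calc R * √(d / n) ≤ √d * √(d / n) := mul_le_mul_of_nonneg_right hR (Real.sqrt_nonneg _)
    _ = d / √n := by rw [← Real.sqrt_mul hd, ← mul_div_assoc, Real.sqrt_div (mul_self_nonneg d),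
      Real.sqrt_mul_self hd]

theorem mul_mul_sqrt_div_le_one {c R d n : ℝ} (hc : 0 ≤ c) (hd : 0 ≤ d) (hR : R ≤ √d)
    (h : c * d / √n ≤ 1) : c * (R * √(d / n)) ≤ 1 :=
  calc c * (R * √(d / n)) ≤ c * (d / √n) := by gcongr; exact mul_sqrt_div_le_div_sqrt hd hR
    _ ≤ 1 := by rwa [← mul_div_assoc]

theorem mul_mul_sqrt_div_sq_le_one {c R d n : ℝ} (hc : 0 ≤ c) (hR₀ : 0 ≤ R) (hd : 0 ≤ d)
    (hn : 0 ≤ n) (hR : R ≤ √d) (h : c * d ^ 2 / n ≤ 1) : c * (R * √(d / n)) ^ 2 ≤ 1 :=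
  calc c * (R * √(d / n)) ^ 2 ≤ c * (d / √n) ^ 2 := by
        gcongr; exact mul_sqrt_div_le_div_sqrt hd hR
    _ ≤ 1 := by rwa [div_pow, Real.sq_sqrt hn, ← mul_div_assoc]

/-- Lemma 2.2: if `v ∈ C⁴` is convex with unique minimizer `x̂`, `H_v = ∇²v(x̂) ≻ 0`,
`c₃ d/√n ≤ 1` and `c₄(R₀) d²/n ≤ 1` for some `0 < R₀ ≤ √d`, then
`v(x) − v(x̂) ≥ (R₀/4)√(d/n)‖x − x̂‖_{H_v}` whenever `‖x − x̂‖_{H_v} ≥ R₀√(d/n)`.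
Here `‖u‖_{H_v}² = ∇²v(x̂)[u,u]`, and the weighted tensor norms are suprema over
`H_v`-unit vectors. -/
theorem stmt11 (d n : ℕ) (hd : 0 < d) (hn : 0 < n)
    (v : (Fin d → ℝ) → ℝ) (hv : ContDiff ℝ 4 v) (hconv : ConvexOn ℝ Set.univ v)
    (xh : Fin d → ℝ) (hmin : ∀ x, x ≠ xh → v xh < v x)
    (hpos : ∀ u : Fin d → ℝ, u ≠ 0 → 0 < iteratedFDeriv ℝ 2 v xh (fun _ => u))
    (c3 c4 R0 : ℝ) (hR0 : 0 < R0) (hR0d : R0 ≤ Real.sqrt d)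
    (hc3 : c3 = sSup {t | ∃ u : Fin d → ℝ, iteratedFDeriv ℝ 2 v xh (fun _ => u) = 1 ∧
        t = |iteratedFDeriv ℝ 3 v xh (fun _ => u)|})
    (hc4 : c4 = sSup {t | ∃ x u : Fin d → ℝ,
        Real.sqrt (iteratedFDeriv ℝ 2 v xh (fun _ => x - xh)) ≤ R0 * Real.sqrt (d / n) ∧
        iteratedFDeriv ℝ 2 v xh (fun _ => u) = 1 ∧
        t = |iteratedFDeriv ℝ 4 v x (fun _ => u)|})
    (h1 : c3 * d / Real.sqrt n ≤ 1) (h2 : c4 * d ^ 2 / n ≤ 1)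
    (x : Fin d → ℝ)
    (hx : R0 * Real.sqrt (d / n) ≤ Real.sqrt (iteratedFDeriv ℝ 2 v xh (fun _ => x - xh))) :
    (R0 / 4) * Real.sqrt (d / n) * Real.sqrt (iteratedFDeriv ℝ 2 v xh (fun _ => x - xh))
      ≤ v x - v xh := by
  set q := iteratedFDeriv ℝ 2 v xh
  set r := R0 * √(d / n)
  set s := √(q fun _ => x - xh)
  have hr : 0 < r := by positivity
  have hs : 0 < s := hr.trans_le hx
  have hqu : 0 < q fun _ => x - xh := Real.sqrt_pos.mp hs
  have hcrit : fderiv ℝ v xh = 0 := IsLocalMin.fderiv_eq_zero <| .of_forall fun y => by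
    rcases eq_or_ne y xh with rfl | hy
    exacts [le_rfl, (hmin y hy).le]
  have hc3r : c3 * r ≤ 1 := mul_mul_sqrt_div_le_one
    (hc3 ▸ Real.sSup_nonneg (by rintro _ ⟨u, -, rfl⟩; positivity)) d.cast_nonneg hR0d h1
  have hc4r : c4 * r ^ 2 ≤ 1 := mul_mul_sqrt_div_sq_le_one
    (hc4 ▸ Real.sSup_nonneg (by rintro _ ⟨-, u, -, -, rfl⟩; positivity)) hR0.le d.cast_nonneg
    n.cast_nonneg hR0d h2
  have hts : r / s * s = r := div_mul_cancel₀ r hs.ne'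
  have h3 : |iteratedFDeriv ℝ 3 v xh (fun _ => x - xh)| ≤ c3 * s ^ 3 :=
    hc3 ▸ abs_apply_diag_le_sSup_mul_weightedNorm_pow hpos _ hqu
  have h4 : ∀ ξ ∈ Ioo 0 (r / s),
      |iteratedFDeriv ℝ 4 v (xh + ξ • (x - xh)) (fun _ => x - xh)| ≤ c4 * s ^ 4 := by
    intro ξ hξ
    refine hc4 ▸ abs_apply_diag_le_sSup_mul_weightedNorm_pow_of_mem hpos
      (hv.continuous_iteratedFDeriv le_rfl) ?_ hqu
    rw [add_sub_cancel_left, weightedNorm_smul, abs_of_pos hξ.1, ← hts]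
    exact mul_le_mul_of_nonneg_right hξ.2.le hs.le
  have hgrowth := sq_mul_div_four_le_sub_of_abs_iteratedFDeriv_le hv hcrit (div_pos hr hs)
    (Real.sq_sqrt hqu.le).symm h3 h4 (by rwa [hts]) (by rwa [hts])
  rw [hts] at hgrowth
  have hconvex := hconv.sub_le_mul_sub xh x (div_pos hr hs).le ((div_le_one hs).mpr hx)
  calc R0 / 4 * √(d / n) * s = r ^ 2 / 4 / (r / s) := by simp only [r]; field_simp
    _ ≤ v x - v xh := (div_le_iff₀' (div_pos hr hs)).mpr (hgrowth.trans hconvex)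
end

section
/- Let ρ and γ be probability measures on R^d with dρ ∝ e^{−r̄} dγ, where r̄ is a measurable function with ∫ r̄ dγ = 0. Then the TV distance between ρ and γ satisfies |2·TV(ρ, γ) − ∫|r̄| dγ| ≤ (2 + ∫|r̄|dγ) ∫ |e^{−r̄} − 1 + r̄| dγ. -/
/-!
Write `Z = ∫ e^{-r̄} dγ` and `E = ∫ |e^{-r̄} - 1 + r̄| dγ`. Jensen gives `Z ≥ 1`, and since `∫ r̄ dγ = 0`,
`Z - 1 = ∫ (e^{-r̄} - 1 + r̄) dγ ≤ E`. Pointwise,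
`e^{-r̄}/Z - 1 + r̄ = (e^{-r̄} - 1 + r̄)/Z + (1 - 1/Z)(r̄ - 1)` with `0 ≤ 1 - 1/Z ≤ Z - 1 ≤ E`, so by the
reverse triangle inequality `|∫ |e^{-r̄}/Z - 1| dγ - ∫ |r̄| dγ| ≤ ∫ |e^{-r̄}/Z - 1 + r̄| dγ ≤ E + E (∫ |r̄| dγ + 1)`.
-/

open MeasureTheory Real

theorem abs_div_sub_one_add_le {a r Z : ℝ} (hZ : 1 ≤ Z) :
    |a / Z - 1 + r| ≤ |a - 1 + r| / Z + (1 - 1 / Z) * (|r| + 1) := by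
  have hZ0 : 0 < Z := by linarith
  have hc : 0 ≤ 1 - 1 / Z := by rw [sub_nonneg, div_le_one hZ0]; exact hZ
  calc |a / Z - 1 + r| = |(a - 1 + r) / Z + (1 - 1 / Z) * (r - 1)| := by
        congr 1; field_simp; ring
    _ ≤ |(a - 1 + r) / Z| + |(1 - 1 / Z) * (r - 1)| := abs_add_le _ _
    _ ≤ |a - 1 + r| / Z + (1 - 1 / Z) * (|r| + 1) := by
        rw [abs_div, abs_of_pos hZ0, abs_mul, abs_of_nonneg hc]
        gcongr
        exact (abs_sub _ _).trans (by simp)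

section

variable {α : Type*} [MeasurableSpace α] {μ : Measure α} {f g : α → ℝ}

theorem abs_integral_abs_sub_integral_abs_le (hf : Integrable f μ) (hg : Integrable g μ) :
    |∫ x, |f x| ∂μ - ∫ x, |g x| ∂μ| ≤ ∫ x, |f x - g x| ∂μ := by
  rw [← integral_sub hf.abs hg.abs]
  calc |∫ x, (|f x| - |g x|) ∂μ| ≤ ∫ x, |(|f x| - |g x|)| ∂μ := abs_integral_le_integral_abs
    _ ≤ ∫ x, |f x - g x| ∂μ :=
      integral_mono (hf.abs.sub hg.abs).abs (hf.sub hg).abs fun _ => abs_abs_sub_abs_le_abs_sub _ _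

variable [IsProbabilityMeasure μ]

theorem one_le_integral_exp_neg (hf : Integrable f μ) (hexp : Integrable (fun x => exp (-f x)) μ)
    (hmean : ∫ x, f x ∂μ = 0) : 1 ≤ ∫ x, exp (-f x) ∂μ := by
  have := convexOn_exp.map_integral_le (μ := μ) (f := fun x => -f x)
    continuous_exp.continuousOn isClosed_univ (.of_forall fun _ => trivial) hf.neg hexp
  simpa [integral_neg, hmean] using this

theorem integral_exp_neg_sub_one_le (hf : Integrable f μ)
    (hexp : Integrable (fun x => exp (-f x)) μ) (hmean : ∫ x, f x ∂μ = 0) :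
    ∫ x, exp (-f x) ∂μ - 1 ≤ ∫ x, |exp (-f x) - 1 + f x| ∂μ := by
  have hsub : Integrable (fun x => exp (-f x) - 1) μ := hexp.sub (integrable_const 1)
  have hint : Integrable (fun x => exp (-f x) - 1 + f x) μ := hsub.add hf
  calc ∫ x, exp (-f x) ∂μ - 1 = ∫ x, (exp (-f x) - 1 + f x) ∂μ := by
        rw [integral_add hsub hf, integral_sub hexp (integrable_const 1), hmean]
        simp
    _ ≤ ∫ x, |exp (-f x) - 1 + f x| ∂μ := integral_mono hint hint.abs fun _ => le_abs_self _

theorem integral_abs_div_sub_one_add_le (hg : Integrable g μ) (hf : Integrable f μ) {Z : ℝ}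
    (hZ : 1 ≤ Z) :
    ∫ x, |g x / Z - 1 + f x| ∂μ
      ≤ (∫ x, |g x - 1 + f x| ∂μ) / Z + (1 - 1 / Z) * (∫ x, |f x| ∂μ + 1) := by
  have hlhs : Integrable (fun x => g x / Z - 1 + f x) μ :=
    ((hg.div_const Z).sub (integrable_const 1)).add hf
  have hnum : Integrable (fun x => |g x - 1 + f x| / Z) μ :=
    ((hg.sub (integrable_const 1)).add hf).abs.div_const Z
  have hrest : Integrable (fun x => (1 - 1 / Z) * (|f x| + 1)) μ :=
    (hf.abs.add (integrable_const 1)).const_mul _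
  calc ∫ x, |g x / Z - 1 + f x| ∂μ
      ≤ ∫ x, (|g x - 1 + f x| / Z + (1 - 1 / Z) * (|f x| + 1)) ∂μ :=
        integral_mono hlhs.abs (hnum.add hrest) fun _ => abs_div_sub_one_add_le hZ
    _ = (∫ x, |g x - 1 + f x| ∂μ) / Z + (1 - 1 / Z) * (∫ x, |f x| ∂μ + 1) := by
        rw [integral_add hnum hrest, integral_div, integral_const_mul,
          integral_add hf.abs (integrable_const 1)]
        simp

end

theorem stmt13_general (d : ℕ) (γ : Measure (Fin d → ℝ)) [IsProbabilityMeasure γ]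
    (rb : (Fin d → ℝ) → ℝ)
    (hexp : Integrable (fun x => Real.exp (-rb x)) γ)
    (hint : Integrable rb γ) (hmean : ∫ x, rb x ∂γ = 0) :
    |2 * ((1 / 2) * ∫ x, |Real.exp (-rb x) / (∫ y, Real.exp (-rb y) ∂γ) - 1| ∂γ)
        - ∫ x, |rb x| ∂γ|
      ≤ (2 + ∫ x, |rb x| ∂γ) * ∫ x, |Real.exp (-rb x) - 1 + rb x| ∂γ := by
  set Z := ∫ y, exp (-rb y) ∂γ
  set R := ∫ x, |rb x| ∂γ
  set E := ∫ x, |exp (-rb x) - 1 + rb x| ∂γ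
  have hZ : 1 ≤ Z := one_le_integral_exp_neg hint hexp hmean
  have hZE : Z - 1 ≤ E := integral_exp_neg_sub_one_le hint hexp hmean
  have hE : 0 ≤ E := integral_nonneg fun _ => abs_nonneg _
  have hcE : 1 - 1 / Z ≤ E := by
    have : (Z - 1) / Z ≤ Z - 1 := div_le_self (by linarith) hZ
    rw [one_sub_div (by positivity)]; linarith
  have hTV : |(∫ x, |exp (-rb x) / Z - 1| ∂γ) - R| ≤ ∫ x, |exp (-rb x) / Z - 1 + rb x| ∂γ := by
    simpa only [Pi.sub_apply, Pi.neg_apply, abs_neg, sub_neg_eq_add] using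
      abs_integral_abs_sub_integral_abs_le ((hexp.div_const Z).sub (integrable_const 1)) hint.neg
  calc |2 * ((1 / 2) * ∫ x, |exp (-rb x) / Z - 1| ∂γ) - R|
      = |(∫ x, |exp (-rb x) / Z - 1| ∂γ) - R| := by congr 2; ring
    _ ≤ ∫ x, |exp (-rb x) / Z - 1 + rb x| ∂γ := hTV
    _ ≤ E / Z + (1 - 1 / Z) * (R + 1) := integral_abs_div_sub_one_add_le hexp hint hZ
    _ ≤ E + E * (R + 1) := by
        have hR : 0 ≤ R := integral_nonneg fun _ => abs_nonneg _
        gcongr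
        exact div_le_self hE hZ
    _ = (2 + R) * E := by ring

/-- Lemma 4.2: if `dρ ∝ e^{−r̄} dγ` with `∫ r̄ dγ = 0`, then
`|2 TV(ρ,γ) − ∫|r̄|dγ| ≤ (2 + ∫|r̄|dγ) ∫|e^{−r̄} − 1 + r̄| dγ`, where
`TV(ρ,γ) = (1/2)∫ |dρ/dγ − 1| dγ` and `dρ/dγ = e^{−r̄}/∫ e^{−r̄} dγ`. -/
theorem stmt13 (d : ℕ) (γ : Measure (Fin d → ℝ)) [IsProbabilityMeasure γ]
    (rb : (Fin d → ℝ) → ℝ) (hmeas : Measurable rb)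
    (hexp : Integrable (fun x => Real.exp (-rb x)) γ)
    (hint : Integrable rb γ) (hmean : ∫ x, rb x ∂γ = 0) :
    |2 * ((1 / 2) * ∫ x, |Real.exp (-rb x) / (∫ y, Real.exp (-rb y) ∂γ) - 1| ∂γ)
        - ∫ x, |rb x| ∂γ|
      ≤ (2 + ∫ x, |rb x| ∂γ) * ∫ x, |Real.exp (-rb x) - 1 + rb x| ∂γ :=
  stmt13_general d γ rb hexp hint hmean
end
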